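/- arXiv:2408.08494 — 5 statements merged into one kernel-verified Lean document; each statement's English description precedes it below -/
import Mathlib

section
/- Let A be a real n×d matrix, S a real s×n matrix, ε ≥ 0, c ≥ 0, and k an integer with 0 ≤ k ≤ d. Suppose that for every d×d orthogonal projection matrix P with rank(P) ≤ k it holds that ‖A(I−P)‖_F² ≤ ‖SA(I−P)‖_F² + c ≤ (1+ε)‖A(I−P)‖_F². Then res_k(A)² ≤ res_k(SA)² + c ≤ (1+ε)·res_k(A)². (This is Lemma 3.5 of the paper: a projection-cost preserving sketch preserves the rank-k residual error.) -/
/-- Squared Frobenius norm of a real matrix. -/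
noncomputable def frobSq {n d : ℕ} (M : Matrix (Fin n) (Fin d) ℝ) : ℝ :=
  ∑ i, ∑ j, (M i j) ^ 2

/-- An orthogonal projection matrix: symmetric and idempotent. -/
def IsOrthProj {d : ℕ} (P : Matrix (Fin d) (Fin d) ℝ) : Prop :=
  P.transpose = P ∧ P * P = P

/-- Squared rank-`k` residual error: infimum of `‖M - B‖_F²` over matrices `B` of rank `≤ k`. -/
noncomputable def resSq {n d : ℕ} (k : ℕ) (M : Matrix (Fin n) (Fin d) ℝ) : ℝ :=
  sInf {x : ℝ | ∃ B : Matrix (Fin n) (Fin d) ℝ, B.rank ≤ k ∧ x = frobSq (M - B)}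

/-!
Every competitor `B` of rank `≤ k` for `res_k(M)` is beaten by `M P`, where `P` is the orthogonal
projection onto the row space of `B`: since `B P = B`, Pythagoras gives
`‖M - B‖_F² = ‖M (1 - P)‖_F² + ‖M P - B‖_F²`. Hence `res_k(M)²` is the infimum of the projection
costs `‖M (1 - P)‖_F²` over orthogonal projections `P` of rank `≤ k`, for `M = A` and `M = S A`
alike, and the hypothesis, being a pointwise sandwich of these costs, passes to the infima.
-/

open Matrix

section Frobenius

variable {m n : ℕ}

lemma frobSq_nonneg (M : Matrix (Fin m) (Fin n) ℝ) : 0 ≤ frobSq M := by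
  unfold frobSq; positivity

lemma frobSq_eq_trace_mul_transpose (M : Matrix (Fin m) (Fin n) ℝ) :
    frobSq M = (M * Mᵀ).trace := by
  simp [frobSq, trace, mul_apply, sq]

lemma frobSq_add_of_mul_transpose_eq_zero {X Y : Matrix (Fin m) (Fin n) ℝ} (h : X * Yᵀ = 0) :
    frobSq (X + Y) = frobSq X + frobSq Y := by
  have h' : Y * Xᵀ = 0 := by simpa using congrArg transpose h
  simp only [frobSq_eq_trace_mul_transpose, transpose_add, Matrix.add_mul, Matrix.mul_add, h, h',
    trace_add, trace_zero]
  ring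

lemma frobSq_mul_one_sub_le {d : ℕ} (M B : Matrix (Fin m) (Fin d) ℝ)
    {P : Matrix (Fin d) (Fin d) ℝ} (hP : IsOrthProj P) (hBP : B * P = B) :
    frobSq (M * (1 - P)) ≤ frobSq (M - B) := by
  obtain ⟨hsym, hidem⟩ := hP
  have hPB : P * Bᵀ = Bᵀ := by simpa [transpose_mul, hsym] using congrArg transpose hBP
  have horth : M * (1 - P) * (M * P - B)ᵀ = 0 := by
    rw [transpose_sub, transpose_mul, hsym, Matrix.mul_assoc, Matrix.sub_mul, Matrix.one_mul,
      Matrix.mul_sub P, ← Matrix.mul_assoc P P, hidem, hPB, sub_self, Matrix.mul_zero]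
  calc frobSq (M * (1 - P))
      ≤ frobSq (M * (1 - P)) + frobSq (M * P - B) := le_add_of_nonneg_right (frobSq_nonneg _)
    _ = frobSq (M - B) := by
      rw [← frobSq_add_of_mul_transpose_eq_zero horth, Matrix.mul_sub, Matrix.mul_one]
      abel_nf

end Frobenius

lemma rank_eq_finrank_range_toEuclideanLin {𝕜 m n : Type*} [RCLike 𝕜] [Fintype m] [Fintype n]
    [DecidableEq n] (A : Matrix m n 𝕜) :
    A.rank = Module.finrank 𝕜 (LinearMap.range (toEuclideanLin A)) :=
  rank_eq_finrank_range_toLin A (PiLp.basisFun 2 𝕜 _) (PiLp.basisFun 2 𝕜 _)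

section OrthProjMatrix

variable {d : ℕ} (W : Submodule ℝ (EuclideanSpace ℝ (Fin d)))

noncomputable def orthProjMatrix : Matrix (Fin d) (Fin d) ℝ :=
  (toEuclideanCLM (n := Fin d) (𝕜 := ℝ)).symm W.starProjection

lemma toEuclideanCLM_orthProjMatrix :
    toEuclideanCLM (n := Fin d) (𝕜 := ℝ) (orthProjMatrix W) = W.starProjection :=
  StarAlgEquiv.apply_symm_apply _ _

lemma isOrthProj_orthProjMatrix : IsOrthProj (orthProjMatrix W) := by
  constructor
  · rw [← conjTranspose_eq_transpose_of_trivial, ← star_eq_conjTranspose]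
    refine EquivLike.injective (toEuclideanCLM (n := Fin d) (𝕜 := ℝ)) ?_
    rw [map_star, toEuclideanCLM_orthProjMatrix]
    exact (isSelfAdjoint_starProjection W).star_eq
  · refine EquivLike.injective (toEuclideanCLM (n := Fin d) (𝕜 := ℝ)) ?_
    rw [map_mul, toEuclideanCLM_orthProjMatrix]
    exact W.isIdempotentElem_starProjection.eq

lemma rank_orthProjMatrix : (orthProjMatrix W).rank = Module.finrank ℝ W := by
  rw [rank_eq_finrank_range_toEuclideanLin, ← coe_toEuclideanCLM_eq_toEuclideanLin,
    toEuclideanCLM_orthProjMatrix, Submodule.range_starProjection]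

lemma orthProjMatrix_mul_of_range_le {m : ℕ} {X : Matrix (Fin d) (Fin m) ℝ}
    (hX : LinearMap.range (toEuclideanLin X) ≤ W) : orthProjMatrix W * X = X := by
  refine toEuclideanLin.injective (LinearMap.ext fun x => ?_)
  rw [toLpLin_mul_same, LinearMap.comp_apply, ← coe_toEuclideanCLM_eq_toEuclideanLin,
    toEuclideanCLM_orthProjMatrix]
  exact W.starProjection_eq_self_iff.2 (hX ⟨x, rfl⟩)

end OrthProjMatrix

lemma exists_isOrthProj_rank_eq_mul_eq_self {m d : ℕ} (B : Matrix (Fin m) (Fin d) ℝ) :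
    ∃ P : Matrix (Fin d) (Fin d) ℝ, IsOrthProj P ∧ P.rank = B.rank ∧ B * P = B := by
  set W := LinearMap.range (toEuclideanLin Bᵀ)
  have hP := isOrthProj_orthProjMatrix W
  refine ⟨orthProjMatrix W, hP, ?_, ?_⟩
  · rw [rank_orthProjMatrix, ← rank_transpose B, rank_eq_finrank_range_toEuclideanLin]
  · simpa [transpose_mul, hP.1] using congrArg transpose (orthProjMatrix_mul_of_range_le W le_rfl)

abbrev OrthProjRankLE (d k : ℕ) : Type :=
  {P : Matrix (Fin d) (Fin d) ℝ // IsOrthProj P ∧ P.rank ≤ k}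

instance (d k : ℕ) : Nonempty (OrthProjRankLE d k) :=
  ⟨⟨0, by simp [IsOrthProj]⟩⟩

lemma resSq_eq_iInf_frobSq_mul_one_sub {m d : ℕ} (k : ℕ) (M : Matrix (Fin m) (Fin d) ℝ) :
    resSq k M = ⨅ P : OrthProjRankLE d k, frobSq (M * (1 - P.1)) := by
  refine csInf_eq_csInf_of_forall_exists_le ?_ ?_
  · rintro _ ⟨B, hBk, rfl⟩
    obtain ⟨P, hP, hrank, hBP⟩ := exists_isOrthProj_rank_eq_mul_eq_self B
    exact ⟨_, ⟨⟨P, hP, hrank ▸ hBk⟩, rfl⟩, frobSq_mul_one_sub_le M B hP hBP⟩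
  · rintro _ ⟨⟨P, -, hPk⟩, rfl⟩
    refine ⟨_, ⟨M * P, (rank_mul_le_right M P).trans hPk, rfl⟩, ?_⟩
    dsimp only
    rw [Matrix.mul_sub, Matrix.mul_one]

lemma bddBelow_range_frobSq_mul_one_sub {m d k : ℕ} (M : Matrix (Fin m) (Fin d) ℝ) :
    BddBelow (Set.range fun P : OrthProjRankLE d k => frobSq (M * (1 - P.1))) :=
  ⟨0, by rintro _ ⟨P, rfl⟩; exact frobSq_nonneg _⟩

lemma ciInf_le_ciInf_add {ι α : Type*} [Nonempty ι] [ConditionallyCompleteLattice α]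
    [AddCommGroup α] [IsOrderedAddMonoid α] {f g : ι → α} (hf : BddBelow (Set.range f)) (c : α)
    (h : ∀ i, f i ≤ g i + c) : ⨅ i, f i ≤ (⨅ i, g i) + c := by
  rw [← sub_le_iff_le_add]
  exact le_ciInf fun i => sub_le_iff_le_add.2 ((ciInf_le hf i).trans (h i))

theorem pcp_preserves_residual_general {n d s : ℕ} (A : Matrix (Fin n) (Fin d) ℝ)
    (S : Matrix (Fin s) (Fin n) ℝ) (ε c : ℝ) (hε : 0 ≤ ε)
    (k : ℕ)
    (h : ∀ P : Matrix (Fin d) (Fin d) ℝ, IsOrthProj P → P.rank ≤ k →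
      frobSq (A * (1 - P)) ≤ frobSq (S * A * (1 - P)) + c ∧
      frobSq (S * A * (1 - P)) + c ≤ (1 + ε) * frobSq (A * (1 - P))) :
    resSq k A ≤ resSq k (S * A) + c ∧
    resSq k (S * A) + c ≤ (1 + ε) * resSq k A := by
  rw [resSq_eq_iInf_frobSq_mul_one_sub, resSq_eq_iInf_frobSq_mul_one_sub,
    Real.mul_iInf_of_nonneg (by linarith)]
  refine ⟨ciInf_le_ciInf_add (bddBelow_range_frobSq_mul_one_sub A) c
    fun P => (h P.1 P.2.1 P.2.2).1, ?_⟩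
  have hupper := ciInf_le_ciInf_add (bddBelow_range_frobSq_mul_one_sub (S * A)) (-c)
    fun P => le_add_neg_iff_add_le.2 (h P.1 P.2.1 P.2.2).2
  linarith

theorem pcp_preserves_residual {n d s : ℕ} (A : Matrix (Fin n) (Fin d) ℝ)
    (S : Matrix (Fin s) (Fin n) ℝ) (ε c : ℝ) (hε : 0 ≤ ε) (hc : 0 ≤ c)
    (k : ℕ) (hk : k ≤ d)
    (h : ∀ P : Matrix (Fin d) (Fin d) ℝ, IsOrthProj P → P.rank ≤ k →
      frobSq (A * (1 - P)) ≤ frobSq (S * A * (1 - P)) + c ∧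
      frobSq (S * A * (1 - P)) + c ≤ (1 + ε) * frobSq (A * (1 - P))) :
    resSq k A ≤ resSq k (S * A) + c ∧
    resSq k (S * A) + c ≤ (1 + ε) * resSq k A :=
  pcp_preserves_residual_general A S ε c hε k h
end

section
/- Let p ≥ 1 be a real number, 1 ≤ k ≤ n integers, δ ≥ 0, and x, x̂ ∈ ℝⁿ with |x̂_i − x_i| ≤ δ for every i. Let I be a top-k set for x and J a top-k set for x̂. If δ ≤ ((2^{1/p} − 1)/2)·‖x_{−k}‖_p, then every i ∈ I \ J satisfies |x_i|^p ≤ 2‖x_{−k}‖_p^p. (Claim from the proof of the paper's Lemma 4.4: every true top-k coordinate that is missed by the estimated top-k set has p-th power at most twice the k-residual.) -/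
open Finset

/-- `I` is a top-`k` set for `x`: it has `k` elements and every coordinate in `I`
dominates (in absolute value) every coordinate outside `I`. -/
def IsTopK {n : ℕ} (k : ℕ) (x : Fin n → ℝ) (I : Finset (Fin n)) : Prop :=
  I.card = k ∧ ∀ i ∈ I, ∀ j ∉ I, |x j| ≤ |x i|

/-- The `ℓ_p` norm of a vector in `ℝⁿ` (for a real exponent `p`). -/
noncomputable def lpNorm (p : ℝ) {n : ℕ} (x : Fin n → ℝ) : ℝ :=
  (∑ i, |x i| ^ p) ^ (1 / p)

/-- The `k`-residual norm `‖x_{-k}‖_p` with respect to a top-`k` set `I`: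
the `ℓ_p` norm of `x` restricted to the complement of `I`. -/
noncomputable def residNorm (p : ℝ) {n : ℕ} (x : Fin n → ℝ) (I : Finset (Fin n)) : ℝ :=
  (∑ i ∈ Iᶜ, |x i| ^ p) ^ (1 / p)

theorem missed_topk_coordinate_small {n : ℕ} (p : ℝ) (hp : 1 ≤ p)
    (k : ℕ) (hk1 : 1 ≤ k) (hkn : k ≤ n)
    (δ : ℝ) (hδ : 0 ≤ δ) (x xhat : Fin n → ℝ)
    (h : ∀ i, |xhat i - x i| ≤ δ)
    (I J : Finset (Fin n)) (hI : IsTopK k x I) (hJ : IsTopK k xhat J)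
    (hδ2 : δ ≤ ((2 : ℝ) ^ (1 / p) - 1) / 2 * residNorm p x I) :
    ∀ i ∈ I \ J, |x i| ^ p ≤ 2 * ∑ j ∈ Iᶜ, |x j| ^ p := by
  intro i hi
  obtain ⟨hiI, hiJ⟩ := Finset.mem_sdiff.mp hi
  obtain ⟨hIc, hItop⟩ := hI
  obtain ⟨hJc, hJtop⟩ := hJ
  have hp0 : (0:ℝ) < p := lt_of_lt_of_le one_pos hp
  have hJI : (J \ I).Nonempty := by
    by_contra hne
    rw [Finset.not_nonempty_iff_eq_empty, Finset.sdiff_eq_empty_iff_subset] at hne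
    have : J = I := Finset.eq_of_subset_of_card_le hne (by rw [hIc, hJc])
    exact hiJ (this ▸ hiI)
  obtain ⟨j, hj⟩ := hJI
  obtain ⟨hjJ, hjI⟩ := Finset.mem_sdiff.mp hj
  set S := ∑ j ∈ Iᶜ, |x j| ^ p with hS
  have hSnn : 0 ≤ S := Finset.sum_nonneg fun _ _ => Real.rpow_nonneg (abs_nonneg _) p
  set R := residNorm p x I with hR
  have hRS : R = S ^ (1/p) := rfl
  have hRnn : 0 ≤ R := by rw [hRS]; exact Real.rpow_nonneg hSnn _
  have hRp : R ^ p = S := by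
    rw [hRS, ← Real.rpow_mul hSnn, one_div_mul_cancel hp0.ne', Real.rpow_one]
  have hxjS : |x j| ^ p ≤ S := by
    refine Finset.single_le_sum (fun m _ => Real.rpow_nonneg (abs_nonneg _) p) ?_
    simpa using hjI
  have hxjR : |x j| ≤ R := by
    have := Real.rpow_le_rpow (Real.rpow_nonneg (abs_nonneg _) p) hxjS
      (le_of_lt (by positivity : (0:ℝ) < 1/p))
    rwa [← Real.rpow_mul (abs_nonneg _), mul_one_div,
      div_self hp0.ne', Real.rpow_one, ← hRS] at this
  have htwo : (1:ℝ) ≤ (2:ℝ) ^ (1/p) :=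
    Real.one_le_rpow (by norm_num) (by positivity)
  have hchain : |x i| ≤ 2 ^ (1/p) * R := by
    have h1 : |x i| ≤ |xhat i| + δ := by
      have := h i
      have h2 := abs_sub_abs_le_abs_sub (x i) (xhat i)
      rw [abs_sub_comm] at h2
      linarith
    have h2 : |xhat i| ≤ |xhat j| := hJtop j hjJ i hiJ
    have h3 : |xhat j| ≤ |x j| + δ := by
      have := h j
      have h4 := abs_sub_abs_le_abs_sub (xhat j) (x j)
      linarith
    have h5 : 2 * δ ≤ (2 ^ (1/p) - 1) * R := by linarith
    nlinarith [hxjR]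
  calc |x i| ^ p ≤ (2 ^ (1/p) * R) ^ p :=
        Real.rpow_le_rpow (abs_nonneg _) hchain hp0.le
    _ = 2 * S := by
        rw [Real.mul_rpow (by positivity) hRnn, ← Real.rpow_mul (by norm_num : (0:ℝ) ≤ 2),
          one_div_mul_cancel hp0.ne', Real.rpow_one, hRp]
end

section
/- Let p ≥ 1 be a real number, 1 ≤ k ≤ n integers, δ ≥ 0, and x, x̂ ∈ ℝⁿ with |x̂_i − x_i| ≤ δ for every i. Let I be a top-k set for x and J a top-k set for x̂, and suppose I \ J is nonempty. Let t = min_{i ∈ I \ J} |x_i| and suppose t ≥ 2δ. Then |I \ J| · (t − 2δ)^p ≤ ‖x_{−k}‖_p^p. (Counting claim underlying the bound |T_ℓ| = O(2^ℓ) in the proof of the paper's Lemma 4.4: the number of displaced coordinates with true magnitude at least t is controlled by the k-residual.) -/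
open Finset

theorem displaced_count_bound {n : ℕ} (p : ℝ) (hp : 1 ≤ p)
    (k : ℕ) (hk1 : 1 ≤ k) (hkn : k ≤ n)
    (δ : ℝ) (hδ : 0 ≤ δ) (x xhat : Fin n → ℝ)
    (h : ∀ i, |xhat i - x i| ≤ δ)
    (I J : Finset (Fin n)) (hI : IsTopK k x I) (hJ : IsTopK k xhat J)
    (hne : (I \ J).Nonempty)
    (t : ℝ) (ht : t = (I \ J).inf' hne fun i => |x i|)
    (h2δ : 2 * δ ≤ t) :
    ((I \ J).card : ℝ) * (t - 2 * δ) ^ p ≤ ∑ i ∈ Iᶜ, |x i| ^ p := by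
  obtain ⟨i0, hi0⟩ := hne
  have hi0I : i0 ∈ I := (Finset.mem_sdiff.mp hi0).1
  have hi0J : i0 ∉ J := (Finset.mem_sdiff.mp hi0).2
  have hti0 : t ≤ |x i0| := ht ▸ Finset.inf'_le _ hi0
  -- every j ∈ J \ I has |x j| ≥ t - 2δ
  have key : ∀ j ∈ J \ I, t - 2 * δ ≤ |x j| := by
    intro j hj
    have hjJ : j ∈ J := (Finset.mem_sdiff.mp hj).1
    have h1 : |xhat i0| ≤ |xhat j| := hJ.2 j hjJ i0 hi0J
    have h2 : |x i0| - δ ≤ |xhat i0| := by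
      have := abs_sub_abs_le_abs_sub (x i0) (xhat i0)
      have h3 : |x i0 - xhat i0| ≤ δ := by rw [abs_sub_comm]; exact h i0
      linarith
    have h4 : |xhat j| - δ ≤ |x j| := by
      have := abs_sub_abs_le_abs_sub (xhat j) (x j)
      have := h j
      linarith
    linarith
  have hcard : (J \ I).card = (I \ J).card := by
    rw [Finset.card_sdiff_comm]
    rw [hI.1, hJ.1]
  have hnonneg : 0 ≤ t - 2 * δ := by linarith
  calc ((I \ J).card : ℝ) * (t - 2 * δ) ^ p
      = ∑ _j ∈ J \ I, (t - 2 * δ) ^ p := by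
        rw [Finset.sum_const, nsmul_eq_mul, hcard]
    _ ≤ ∑ j ∈ J \ I, |x j| ^ p := by
        apply Finset.sum_le_sum
        intro j hj
        exact Real.rpow_le_rpow hnonneg (key j hj) (by linarith)
    _ ≤ ∑ i ∈ Iᶜ, |x i| ^ p := by
        apply Finset.sum_le_sum_of_subset_of_nonneg
        · intro j hj
          simp [Finset.mem_compl, (Finset.mem_sdiff.mp hj).2]
        · intro i _ _
          exact Real.rpow_nonneg (abs_nonneg _) p
end

section
/- Let p > 2 be a real number. There exist constants c₁ > 0 and C > 0, depending only on p, with the following property. Let 1 ≤ k ≤ n be integers, let 0 < ε ≤ 1, and let x, x̂ ∈ ℝⁿ satisfy |x̂_i − x_i| ≤ ε·‖x_{−k}‖_p / (c₁ k^{1/p}) for every i. Let I be a top-k set for x and J a top-k set for x̂. Then ∑_{i∈I} |x_i|^p − ∑_{j∈J} |x_j|^p ≤ C·ε^{1−1/p}·‖x_{−k}‖_p^p. (Lemma 4.4 of the paper: the total p-th-power mass of the true top-k set exceeds that of the estimated top-k set by at most O(ε^{1−1/p}) times the k-residual.) -/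
open Finset

lemma one_add_rpow_le (p u : ℝ) (hp : 1 ≤ p) (hu0 : 0 ≤ u) (hu1 : u ≤ 1) :
    (1 + u) ^ p ≤ 1 + (2 ^ p - 1) * u := by
  have hc := convexOn_rpow hp
  have h := hc.2 (Set.mem_Ici.mpr (zero_le_one)) (Set.mem_Ici.mpr (by norm_num : (0:ℝ) ≤ 2))
    (by linarith : (0:ℝ) ≤ 1 - u) hu0 (by ring : (1 - u) + u = 1)
  simp only [smul_eq_mul] at h
  have h1 : (1 - u) * 1 + u * 2 = 1 + u := by ring
  rw [h1] at h
  calc (1 + u) ^ p ≤ (1 - u) * (1:ℝ) ^ p + u * (2:ℝ) ^ p := h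
    _ = 1 + (2 ^ p - 1) * u := by rw [Real.one_rpow]; ring

lemma rpow_add_sub_le (p m a : ℝ) (hp : 1 ≤ p) (hm : 0 < m) (ha0 : 0 ≤ a) (ham : a ≤ m) :
    (m + a) ^ p - m ^ p ≤ (2 ^ p - 1) * a * m ^ p / m := by
  have hu0 : 0 ≤ a / m := by positivity
  have hu1 : a / m ≤ 1 := (div_le_one hm).mpr ham
  have hma : m + a = m * (1 + a / m) := by field_simp
  have h1 : (m + a) ^ p = m ^ p * (1 + a / m) ^ p := by
    rw [hma, Real.mul_rpow hm.le (by linarith)]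
  have h2 := one_add_rpow_le p (a / m) hp hu0 hu1
  have hmp : (0:ℝ) ≤ m ^ p := Real.rpow_nonneg hm.le p
  have h3 : (m + a) ^ p ≤ m ^ p * (1 + (2 ^ p - 1) * (a / m)) := by
    rw [h1]; exact mul_le_mul_of_nonneg_left h2 hmp
  have : m ^ p * (1 + (2 ^ p - 1) * (a / m)) = m ^ p + (2 ^ p - 1) * a * m ^ p / m := by
    field_simp
  linarith [h3.trans_eq this]

theorem topk_mass_loss_bound (p : ℝ) (hp : 2 < p) :
    ∃ c₁ > (0 : ℝ), ∃ C > (0 : ℝ),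
      ∀ (n k : ℕ), 1 ≤ k → k ≤ n →
      ∀ ε : ℝ, 0 < ε → ε ≤ 1 →
      ∀ (x xhat : Fin n → ℝ) (I J : Finset (Fin n)),
        IsTopK k x I → IsTopK k xhat J →
        (∀ i, |xhat i - x i| ≤ ε * residNorm p x I / (c₁ * (k : ℝ) ^ (1 / p))) →
        ∑ i ∈ I, |x i| ^ p - ∑ j ∈ J, |x j| ^ p ≤
          C * ε ^ (1 - 1 / p) * ∑ i ∈ Iᶜ, |x i| ^ p := by
  have hp0 : (0:ℝ) < p := by linarith
  have hp1 : (1:ℝ) ≤ p := by linarith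
  have hpinv : (0:ℝ) < 1 / p := by positivity
  have hpinv1 : 1 / p ≤ 1 := by
    rw [div_le_one hp0]; linarith
  refine ⟨2, by norm_num, (2:ℝ) ^ p, Real.rpow_pos_of_pos two_pos p, ?_⟩
  intro n k hk1 hkn ε hε0 hε1 x xhat I J hI hJ hclose
  obtain ⟨hIcard, hItop⟩ := hI
  obtain ⟨hJcard, hJtop⟩ := hJ
  have hk0 : (0:ℝ) < (k:ℝ) := by exact_mod_cast hk1
  set S : ℝ := ∑ i ∈ Iᶜ, |x i| ^ p with hSdef
  have hS0 : 0 ≤ S :=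
    Finset.sum_nonneg fun i _ => Real.rpow_nonneg (abs_nonneg _) p
  set r : ℝ := residNorm p x I with hrdef
  have hr0 : 0 ≤ r := Real.rpow_nonneg hS0 _
  have hrS : r ^ p = S := by
    rw [hrdef, residNorm, ← hSdef, ← Real.rpow_mul hS0,
      one_div_mul_cancel (ne_of_gt hp0), Real.rpow_one]
  set δ : ℝ := ε * r / (2 * (k:ℝ) ^ (1 / p)) with hδdef
  have hkp : (0:ℝ) < (k:ℝ) ^ (1/p) := Real.rpow_pos_of_pos hk0 _
  have hδ0 : 0 ≤ δ := by positivity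
  set t : ℝ := (ε / (k:ℝ)) ^ (1/p) * r with htdef
  have ht0 : 0 ≤ t := by positivity
  -- ε ≤ ε ^ (1/p)
  have hεle : ε ≤ ε ^ (1/p) := by
    calc ε = ε ^ (1:ℝ) := (Real.rpow_one ε).symm
      _ ≤ ε ^ (1/p) := Real.rpow_le_rpow_of_exponent_ge hε0 hε1 hpinv1
  have hεle' : ε ≤ ε ^ (1 - 1/p) := by
    calc ε = ε ^ (1:ℝ) := (Real.rpow_one ε).symm
      _ ≤ ε ^ (1 - 1/p) := Real.rpow_le_rpow_of_exponent_ge hε0 hε1 (by linarith)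
  have hεexp0 : 0 ≤ ε ^ (1 - 1/p) := (Real.rpow_pos_of_pos hε0 _).le
  -- 2δ ≤ t
  have h2δt : 2 * δ ≤ t := by
    have ht' : t = ε ^ (1/p) / (k:ℝ) ^ (1/p) * r := by
      rw [htdef, Real.div_rpow hε0.le hk0.le]
    have h2δ : 2 * δ = ε / (k:ℝ) ^ (1/p) * r := by
      rw [hδdef]; field_simp
    rw [ht', h2δ]
    gcongr
  -- reduce goal to difference over sdiffs
  have hsplit : ∑ i ∈ I, |x i| ^ p - ∑ j ∈ J, |x j| ^ p
      = ∑ i ∈ I \ J, |x i| ^ p - ∑ j ∈ J \ I, |x j| ^ p := by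
    have hI' : ∑ i ∈ I, |x i| ^ p
        = ∑ i ∈ I \ J, |x i| ^ p + ∑ i ∈ I ∩ J, |x i| ^ p := by
      rw [← Finset.sum_union (Finset.disjoint_sdiff_inter I J), Finset.sdiff_union_inter]
    have hJ' : ∑ j ∈ J, |x j| ^ p
        = ∑ j ∈ J \ I, |x j| ^ p + ∑ j ∈ I ∩ J, |x j| ^ p := by
      rw [Finset.inter_comm,
        ← Finset.sum_union (Finset.disjoint_sdiff_inter J I), Finset.sdiff_union_inter]
    rw [hI', hJ']; ring
  rw [hsplit]
  rcases Finset.eq_empty_or_nonempty (J \ I) with hJI | hJI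
  · have hd : (I \ J).card = (J \ I).card := by
      have h1 := Finset.card_inter_add_card_sdiff I J
      have h2 := Finset.card_inter_add_card_sdiff J I
      rw [Finset.inter_comm] at h2
      omega
    have : I \ J = ∅ := Finset.card_eq_zero.mp (by rw [hd, hJI]; simp)
    rw [this, hJI]
    simp only [Finset.sum_empty, sub_zero]
    positivity
  · obtain ⟨j₀, hj₀, hmin⟩ := Finset.exists_min_image (J \ I) (fun j => |x j|) hJI
    set m : ℝ := |x j₀| with hmdef
    have hm0 : 0 ≤ m := abs_nonneg _
    have hd : (I \ J).card = (J \ I).card := by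
      have h1 := Finset.card_inter_add_card_sdiff I J
      have h2 := Finset.card_inter_add_card_sdiff J I
      rw [Finset.inter_comm] at h2
      omega
    set d : ℕ := (J \ I).card with hddef
    have hdk : d ≤ k := by
      rw [hddef, ← hJcard]; exact Finset.card_le_card (Finset.sdiff_subset)
    -- each i in I \ J has |x i| ≤ m + 2δ
    have hi_bound : ∀ i ∈ I \ J, |x i| ≤ m + 2 * δ := by
      intro i hi
      have hiJ : i ∉ J := (Finset.mem_sdiff.mp hi).2
      have h1 : |x i| ≤ |xhat i| + δ := by
        have := hclose i
        have h := abs_sub_abs_le_abs_sub (x i) (xhat i)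
        rw [abs_sub_comm] at h
        linarith
      have h2 : |xhat i| ≤ |xhat j₀| := hJtop j₀ (Finset.mem_sdiff.mp hj₀).1 i hiJ
      have h3 : |xhat j₀| ≤ |x j₀| + δ := by
        have := hclose j₀
        have h := abs_sub_abs_le_abs_sub (xhat j₀) (x j₀)
        linarith
      linarith
    -- sum bounds
    have hA : ∑ i ∈ I \ J, |x i| ^ p ≤ (d:ℝ) * (m + 2 * δ) ^ p := by
      calc ∑ i ∈ I \ J, |x i| ^ p ≤ ∑ i ∈ I \ J, (m + 2 * δ) ^ p :=
            Finset.sum_le_sum fun i hi =>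
              Real.rpow_le_rpow (abs_nonneg _) (hi_bound i hi) hp0.le
        _ = (d:ℝ) * (m + 2 * δ) ^ p := by
            rw [Finset.sum_const, nsmul_eq_mul, hd]
    have hB : (d:ℝ) * m ^ p ≤ ∑ j ∈ J \ I, |x j| ^ p := by
      calc (d:ℝ) * m ^ p = ∑ _j ∈ J \ I, m ^ p := by rw [Finset.sum_const, nsmul_eq_mul]
        _ ≤ ∑ j ∈ J \ I, |x j| ^ p :=
            Finset.sum_le_sum fun j hj => Real.rpow_le_rpow hm0 (hmin j hj) hp0.le
    have hJIsub : J \ I ⊆ Iᶜ := by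
      intro j hj
      exact Finset.mem_compl.mpr (Finset.mem_sdiff.mp hj).2
    have hdmS : (d:ℝ) * m ^ p ≤ S := by
      refine hB.trans ?_
      exact Finset.sum_le_sum_of_subset_of_nonneg hJIsub
        fun i _ _ => Real.rpow_nonneg (abs_nonneg _) p
    have hmr : m ≤ r := by
      have h1 : m ^ p ≤ S := by
        have : (1:ℝ) * m ^ p ≤ (d:ℝ) * m ^ p := by
          apply mul_le_mul_of_nonneg_right _ (Real.rpow_nonneg hm0 p)
          exact_mod_cast Finset.card_pos.mpr hJI
        linarith
      rw [← hrS] at h1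
      exact (Real.rpow_le_rpow_iff hm0 hr0 hp0).mp h1
    have hgoal : ∑ i ∈ I \ J, |x i| ^ p - ∑ j ∈ J \ I, |x j| ^ p
        ≤ (d:ℝ) * ((m + 2 * δ) ^ p - m ^ p) := by
      have := sub_le_sub hA hB
      linarith [this]
    have htp : t ^ p = ε / (k:ℝ) * S := by
      rw [htdef, Real.mul_rpow (by positivity) hr0, ← Real.rpow_mul (by positivity),
        one_div_mul_cancel (ne_of_gt hp0), Real.rpow_one, hrS]
    have h2p0 : (0:ℝ) < (2:ℝ) ^ p := Real.rpow_pos_of_pos two_pos p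
    rcases le_or_gt m t with hmt | hmt
    · -- small case
      have h1 : (m + 2 * δ) ^ p ≤ (2 * t) ^ p := by
        apply Real.rpow_le_rpow (by positivity) (by linarith) hp0.le
      have h2 : (2 * t) ^ p = 2 ^ p * t ^ p := Real.mul_rpow (by norm_num) ht0
      have hchain : (d:ℝ) * ((m + 2 * δ) ^ p - m ^ p) ≤ (k:ℝ) * (2 ^ p * (ε / (k:ℝ) * S)) := by
        have hmp0 : 0 ≤ m ^ p := Real.rpow_nonneg hm0 p
        have hdk' : (d:ℝ) ≤ (k:ℝ) := by exact_mod_cast hdk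
        have hle : (m + 2 * δ) ^ p - m ^ p ≤ 2 ^ p * (ε / (k:ℝ) * S) := by
          rw [← htp, ← h2]; linarith
        have hnn : (0:ℝ) ≤ 2 ^ p * (ε / (k:ℝ) * S) := by positivity
        calc (d:ℝ) * ((m + 2 * δ) ^ p - m ^ p) ≤ (d:ℝ) * (2 ^ p * (ε / (k:ℝ) * S)) := by
              apply mul_le_mul_of_nonneg_left hle (by positivity)
          _ ≤ (k:ℝ) * (2 ^ p * (ε / (k:ℝ) * S)) := mul_le_mul_of_nonneg_right hdk' hnn
      have heq : (k:ℝ) * (2 ^ p * (ε / (k:ℝ) * S)) = 2 ^ p * ε * S := by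
        field_simp
      have hfinal : 2 ^ p * ε * S ≤ 2 ^ p * ε ^ (1 - 1/p) * S := by
        apply mul_le_mul_of_nonneg_right _ hS0
        exact mul_le_mul_of_nonneg_left hεle' h2p0.le
      linarith [hgoal, hchain.trans_eq heq]
    · -- large case : t < m
      have hm_pos : 0 < m := lt_of_le_of_lt ht0 hmt
      have hr_pos : 0 < r := lt_of_lt_of_le hm_pos hmr
      have ht_pos : 0 < t := by
        rw [htdef]; positivity
      have hkey : (m + 2 * δ) ^ p - m ^ p ≤ (2 ^ p - 1) * (2 * δ) * m ^ p / m :=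
        rpow_add_sub_le p m (2 * δ) hp1 hm_pos (by linarith) (by linarith)
      -- d * (that) ≤ (2^p - 1) * (2δ) * S / t
      have hstep : (d:ℝ) * ((2 ^ p - 1) * (2 * δ) * m ^ p / m)
          ≤ (2 ^ p - 1) * (2 * δ) * S / t := by
        have h2p1 : (0:ℝ) ≤ 2 ^ p - 1 := by
          have : (1:ℝ) = (2:ℝ) ^ (0:ℝ) := (Real.rpow_zero 2).symm
          rw [this]
          have := Real.rpow_le_rpow_of_exponent_le (by norm_num : (1:ℝ) ≤ 2) hp0.le
          linarith
        have hdm : (d:ℝ) * m ^ p / m ≤ S / t := by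
          apply div_le_div₀ hS0 hdmS ht_pos hmt.le
        calc (d:ℝ) * ((2 ^ p - 1) * (2 * δ) * m ^ p / m)
            = (2 ^ p - 1) * (2 * δ) * ((d:ℝ) * m ^ p / m) := by ring
          _ ≤ (2 ^ p - 1) * (2 * δ) * (S / t) := by
              apply mul_le_mul_of_nonneg_left hdm (by positivity)
          _ = (2 ^ p - 1) * (2 * δ) * S / t := by ring
      have h2δteq : 2 * δ / t = ε ^ (1 - 1/p) := by
        have ht' : t = ε ^ (1/p) / (k:ℝ) ^ (1/p) * r := by
          rw [htdef, Real.div_rpow hε0.le hk0.le]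
        have h2δ : 2 * δ = ε / (k:ℝ) ^ (1/p) * r := by
          rw [hδdef]; field_simp
        have hεp_pos : 0 < ε ^ (1/p) := Real.rpow_pos_of_pos hε0 _
        rw [ht', h2δ, Real.rpow_sub hε0, Real.rpow_one]
        field_simp
      have hstep2 : (2 ^ p - 1) * (2 * δ) * S / t ≤ 2 ^ p * ε ^ (1 - 1/p) * S := by
        have h2p1 : (0:ℝ) ≤ 2 ^ p - 1 := by
          have : (1:ℝ) = (2:ℝ) ^ (0:ℝ) := (Real.rpow_zero 2).symm
          rw [this]
          have := Real.rpow_le_rpow_of_exponent_le (by norm_num : (1:ℝ) ≤ 2) hp0.le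
          linarith
        have : (2 ^ p - 1) * (2 * δ) * S / t = (2 ^ p - 1) * (2 * δ / t) * S := by
          field_simp
        rw [this, h2δteq]
        apply mul_le_mul_of_nonneg_right _ hS0
        apply mul_le_mul_of_nonneg_right _ hεexp0
        linarith
      have hdnn : (0:ℝ) ≤ (d:ℝ) := Nat.cast_nonneg d
      have : (d:ℝ) * ((m + 2 * δ) ^ p - m ^ p)
          ≤ (d:ℝ) * ((2 ^ p - 1) * (2 * δ) * m ^ p / m) :=
        mul_le_mul_of_nonneg_left hkey hdnn
      linarith [hgoal, this.trans (hstep.trans hstep2)]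
end

section
/- Let p > 2 be a real number. There exist constants c₁ > 0 and C > 0, depending only on p, with the following property. Let 1 ≤ k ≤ n be integers, let 0 < ε ≤ 1, and let x, x̂ ∈ ℝⁿ satisfy |x̂_i − x_i| ≤ ε^{p/(p−1)}·‖x_{−k}‖_p / (c₁ k^{1/p}) for every i. Let J be a top-k set for x̂, and let x̂_J ∈ ℝⁿ be the k-sparse vector with (x̂_J)_j = x̂_j for j ∈ J and (x̂_J)_j = 0 for j ∉ J. Then | ‖x − x̂_J‖_p^p − ‖x_{−k}‖_p^p | ≤ C·ε·‖x_{−k}‖_p^p; in particular ‖x − x̂_J‖_p^p ≤ (1 + Cε)·‖x_{−k}‖_p^p. (The deterministic core of the paper's Theorems 4.5 and 4.6: the k-sparse vector built from the estimated top-k coordinates solves the (1+O(ε))-approximate ℓ_p sparse recovery problem, and its residual p-norm is a (1±O(ε))-approximation of the k-residual ‖x_{−k}‖_p^p.) -/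
open Finset

/-
Write `S = ∑_{i ∉ I} |x_i|^p` and `δ` for the uniform error bound. On `J` the vector
`x - x̂_J` is `x - x̂`, contributing at most `k δ^p`; off `J` it is `x`, contributing `S` plus
the `x`-mass of `I \ J` minus that of `J \ I`. That difference is nonnegative since `I` is top-`k`
for `x`. Conversely, `I \ J` and `J \ I` have the same size, and since `J` is top-`k` for `x̂`
every coordinate of `I \ J` is at most `2δ` larger in absolute value than every coordinate of
`J \ I`; the inequality `(a + t)^p ≤ (1 + (2^p - 1) ε) a^p + (2/ε)^p t^p` then bounds
the difference by `(2^p - 1) ε S + k (4δ/ε)^p`. The prescribed `δ` gives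
`k δ^p = ε^{p²/(p-1)} S`, which makes both error terms `O(ε S)`.
-/

lemma one_add_rpow_le_one_add_mul {p ε : ℝ} (hp : 1 ≤ p) (hε0 : 0 ≤ ε) (hε1 : ε ≤ 1) :
    (1 + ε) ^ p ≤ 1 + (2 ^ p - 1) * ε := by
  have h := (convexOn_rpow hp).2 (Set.mem_Ici.2 zero_le_one) (Set.mem_Ici.2 zero_le_two)
    (sub_nonneg.2 hε1) hε0 (sub_add_cancel 1 ε)
  simp only [smul_eq_mul, mul_one, Real.one_rpow] at h
  calc (1 + ε) ^ p = (1 - ε + ε * 2) ^ p := by ring_nf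
    _ ≤ 1 - ε + ε * 2 ^ p := h
    _ = 1 + (2 ^ p - 1) * ε := by ring

lemma add_rpow_le_one_add_mul_rpow_add {p a t η : ℝ} (hp : 1 ≤ p) (ha : 0 ≤ a) (ht : 0 ≤ t)
    (hη0 : 0 < η) (hη1 : η ≤ 1) :
    (a + t) ^ p ≤ (1 + (2 ^ p - 1) * η) * a ^ p + (2 / η) ^ p * t ^ p := by
  have hp0 : 0 ≤ p := by linarith
  have hhead : 0 ≤ (1 + (2 ^ p - 1) * η) * a ^ p := by
    have : (1 : ℝ) ≤ 2 ^ p := Real.one_le_rpow one_le_two hp0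
    have : 0 ≤ (2 ^ p - 1) * η := by nlinarith
    positivity
  have htail : 0 ≤ (2 / η) ^ p * t ^ p := by positivity
  by_cases hta : t ≤ η * a
  · calc (a + t) ^ p ≤ ((1 + η) * a) ^ p := by gcongr; linarith
      _ = (1 + η) ^ p * a ^ p := Real.mul_rpow (by linarith) ha
      _ ≤ (1 + (2 ^ p - 1) * η) * a ^ p := by
          gcongr; exact one_add_rpow_le_one_add_mul hp hη0.le hη1
      _ ≤ _ := le_add_of_nonneg_right htail
  · have hat : a + t ≤ 2 / η * t := by
      rw [div_mul_eq_mul_div, le_div_iff₀ hη0]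
      nlinarith
    calc (a + t) ^ p ≤ (2 / η * t) ^ p := by gcongr
      _ = (2 / η) ^ p * t ^ p := Real.mul_rpow (by positivity) ht
      _ ≤ _ := le_add_of_nonneg_left hhead

lemma Finset.sum_le_sum_of_card_eq {α β M : Type*} [AddCommMonoid M] [PartialOrder M]
    [IsOrderedAddMonoid M] {s : Finset α} {t : Finset β} (h : s.card = t.card) {f : α → M}
    {g : β → M}
    (hfg : ∀ a ∈ s, ∀ b ∈ t, f a ≤ g b) : ∑ a ∈ s, f a ≤ ∑ b ∈ t, g b := by
  let e := s.equivOfCardEq h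
  calc ∑ a ∈ s, f a = ∑ a : s, f a := (sum_coe_sort s f).symm
    _ ≤ ∑ a : s, g (e a) := sum_le_sum fun a _ => hfg a a.2 (e a) (e a).2
    _ = ∑ b : t, g b := e.sum_comp fun b => g b
    _ = ∑ b ∈ t, g b := sum_coe_sort t g

lemma Finset.sum_compl_add_sum_sdiff_comm {α M : Type*} [Fintype α] [DecidableEq α]
    [AddCancelCommMonoid M] (f : α → M) (I J : Finset α) :
    ∑ i ∈ Iᶜ, f i + ∑ i ∈ I \ J, f i = ∑ i ∈ Jᶜ, f i + ∑ i ∈ J \ I, f i := by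
  apply add_right_cancel (b := ∑ i ∈ I ∩ J, f i)
  rw [add_assoc, add_comm (∑ i ∈ I \ J, f i), sum_inter_add_sum_sdiff, sum_compl_add_sum,
    add_assoc, inter_comm, add_comm (∑ i ∈ J \ I, f i), sum_inter_add_sum_sdiff,
    sum_compl_add_sum]

namespace IsTopK

variable {n k : ℕ} {p : ℝ} {x : Fin n → ℝ} {I J : Finset (Fin n)}

lemma sum_compl_rpow_le (hI : IsTopK k x I) (hJ : J.card = k) (hp : 0 ≤ p) :
    ∑ i ∈ Iᶜ, |x i| ^ p ≤ ∑ i ∈ Jᶜ, |x i| ^ p := by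
  have hswap : ∑ i ∈ J \ I, |x i| ^ p ≤ ∑ i ∈ I \ J, |x i| ^ p := by
    refine sum_le_sum_of_card_eq (card_sdiff_comm (hJ.trans hI.1.symm)) fun b hb a ha => ?_
    rw [mem_sdiff] at ha hb
    exact Real.rpow_le_rpow (abs_nonneg _) (hI.2 a ha.1 b hb.2) hp
  linarith [sum_compl_add_sum_sdiff_comm (fun i => |x i| ^ p) I J]

lemma sum_compl_rpow_le_of_abs_sub_le {xhat : Fin n → ℝ} {η δ : ℝ} (hI : IsTopK k x I)
    (hJ : IsTopK k xhat J) (herr : ∀ i, |xhat i - x i| ≤ δ) (hp : 1 ≤ p) (hη0 : 0 < η)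
    (hη1 : η ≤ 1) (hδ : 0 ≤ δ) :
    ∑ i ∈ Jᶜ, |x i| ^ p ≤
      (1 + (2 ^ p - 1) * η) * ∑ i ∈ Iᶜ, |x i| ^ p + k * (4 / η) ^ p * δ ^ p := by
  have hcard : (I \ J).card = (J \ I).card := card_sdiff_comm (hI.1.trans hJ.1.symm)
  have hpair : ∑ i ∈ I \ J, |x i| ^ p ≤ ∑ j ∈ J \ I, (|x j| + 2 * δ) ^ p := by
    refine sum_le_sum_of_card_eq hcard fun i hi j hj => ?_
    rw [mem_sdiff] at hi hj
    have hij := hJ.2 j hj.1 i hi.2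
    have hi' := (abs_sub_abs_le_abs_sub (x i) (xhat i)).trans
      ((abs_sub_comm _ _).trans_le (herr i))
    have hj' := (abs_sub_abs_le_abs_sub (xhat j) (x j)).trans (herr j)
    exact Real.rpow_le_rpow (abs_nonneg _) (by linarith) (by linarith)
  have hsplit : ∑ j ∈ J \ I, (|x j| + 2 * δ) ^ p ≤
      (1 + (2 ^ p - 1) * η) * ∑ j ∈ J \ I, |x j| ^ p + k * (4 / η) ^ p * δ ^ p := by
    have hcardJ : ((J \ I).card : ℝ) ≤ k := by exact_mod_cast hJ.1 ▸ card_le_card sdiff_subset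
    have htail : (2 / η) ^ p * (2 * δ) ^ p = (4 / η) ^ p * δ ^ p := by
      rw [Real.mul_rpow zero_le_two hδ, ← mul_assoc,
        ← Real.mul_rpow (by positivity) zero_le_two]
      ring_nf
    calc ∑ j ∈ J \ I, (|x j| + 2 * δ) ^ p
        ≤ ∑ j ∈ J \ I, ((1 + (2 ^ p - 1) * η) * |x j| ^ p + (4 / η) ^ p * δ ^ p) := by
          refine sum_le_sum fun j _ => htail ▸ ?_
          exact add_rpow_le_one_add_mul_rpow_add hp (abs_nonneg _) (by positivity) hη0 hη1
      _ = (1 + (2 ^ p - 1) * η) * ∑ j ∈ J \ I, |x j| ^ p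
            + (J \ I).card * ((4 / η) ^ p * δ ^ p) := by
          rw [sum_add_distrib, ← mul_sum, sum_const, nsmul_eq_mul]
      _ ≤ _ := by rw [← mul_assoc]; gcongr
  have hsub : ∑ j ∈ J \ I, |x j| ^ p ≤ ∑ i ∈ Iᶜ, |x i| ^ p :=
    sum_le_sum_of_subset_of_nonneg (fun j hj => mem_compl.2 (mem_sdiff.1 hj).2)
      fun _ _ _ => by positivity
  have hη : 0 ≤ (2 ^ p - 1) * η :=
    mul_nonneg (sub_nonneg.2 (Real.one_le_rpow one_le_two (by linarith))) hη0.le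
  have := mul_le_mul_of_nonneg_left hsub hη
  linarith [sum_compl_add_sum_sdiff_comm (fun i => |x i| ^ p) I J]

end IsTopK

lemma sum_abs_sub_truncation_rpow_bounds {n k : ℕ} {p η δ : ℝ} {x xhat xhatJ : Fin n → ℝ}
    {I J : Finset (Fin n)} (hI : IsTopK k x I) (hJ : IsTopK k xhat J)
    (herr : ∀ i, |xhat i - x i| ≤ δ) (hxhatJ : ∀ j, xhatJ j = if j ∈ J then xhat j else 0)
    (hp : 1 ≤ p) (hη0 : 0 < η) (hη1 : η ≤ 1) (hδ : 0 ≤ δ) :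
    ∑ i ∈ Iᶜ, |x i| ^ p ≤ ∑ i, |x i - xhatJ i| ^ p ∧
      ∑ i, |x i - xhatJ i| ^ p ≤
        (1 + (2 ^ p - 1) * η) * ∑ i ∈ Iᶜ, |x i| ^ p + k * δ ^ p * (1 + (4 / η) ^ p) := by
  have hsplit :
      ∑ i, |x i - xhatJ i| ^ p = ∑ j ∈ J, |x j - xhat j| ^ p + ∑ i ∈ Jᶜ, |x i| ^ p := by
    rw [← sum_add_sum_compl J]
    congr 1 <;> refine sum_congr rfl fun i hi => ?_
    · rw [hxhatJ, if_pos hi]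
    · rw [hxhatJ, if_neg (mem_compl.1 hi), sub_zero]
  have hhead : ∑ j ∈ J, |x j - xhat j| ^ p ≤ k * δ ^ p :=
    calc ∑ j ∈ J, |x j - xhat j| ^ p ≤ ∑ j ∈ J, δ ^ p :=
          sum_le_sum fun j _ => by gcongr; exact (abs_sub_comm _ _).trans_le (herr j)
      _ = k * δ ^ p := by rw [sum_const, hJ.1, nsmul_eq_mul]
  have hhead0 : 0 ≤ ∑ j ∈ J, |x j - xhat j| ^ p := by positivity
  have hlow := hI.sum_compl_rpow_le hJ.1 (zero_le_one.trans hp)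
  have hup := hI.sum_compl_rpow_le_of_abs_sub_le hJ herr hp hη0 hη1 hδ
  constructor <;> linarith

lemma rpow_mul_one_add_div_rpow_le {p ε : ℝ} (hp : 1 < p) (hε0 : 0 < ε) (hε1 : ε ≤ 1) :
    ε ^ (p / (p - 1) * p) * (1 + (4 / ε) ^ p) ≤ (1 + 4 ^ p) * ε := by
  have hq : p / (p - 1) * p = p + p / (p - 1) := by
    have : p - 1 ≠ 0 := by linarith
    field_simp
    ring
  have hq1 : 1 ≤ p / (p - 1) := by rw [le_div_iff₀ (by linarith)]; linarith
  have hεq : ε ^ (p / (p - 1)) ≤ ε := by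
    simpa using Real.rpow_le_rpow_of_exponent_ge hε0 hε1 hq1
  have hεp : ε ^ p ≤ 1 := Real.rpow_le_one hε0.le hε1 (by linarith)
  have hεp0 : 0 < ε ^ p := by positivity
  rw [hq, Real.rpow_add hε0, Real.div_rpow zero_le_four hε0.le]
  calc ε ^ p * ε ^ (p / (p - 1)) * (1 + 4 ^ p / ε ^ p)
      = ε ^ p * ε ^ (p / (p - 1)) + 4 ^ p * ε ^ (p / (p - 1)) := by field_simp
    _ ≤ 1 * ε + 4 ^ p * ε := by gcongr
    _ = (1 + 4 ^ p) * ε := by ring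

lemma mul_rpow_one_div_div_rpow_one_div_rpow {p a S κ : ℝ} (hp : p ≠ 0) (ha : 0 ≤ a)
    (hS : 0 ≤ S) (hκ : 0 ≤ κ) : (a * S ^ (1 / p) / κ ^ (1 / p)) ^ p = a ^ p * S / κ := by
  rw [Real.div_rpow (by positivity) (by positivity), Real.mul_rpow ha (by positivity),
    ← Real.rpow_mul hS, ← Real.rpow_mul hκ, one_div_mul_cancel hp, Real.rpow_one,
    Real.rpow_one]

theorem sparse_recovery_approximation (p : ℝ) (hp : 2 < p) :
    ∃ c₁ > (0 : ℝ), ∃ C > (0 : ℝ),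
      ∀ (n k : ℕ), 1 ≤ k → k ≤ n →
      ∀ ε : ℝ, 0 < ε → ε ≤ 1 →
      ∀ (x xhat : Fin n → ℝ) (I J : Finset (Fin n)),
        IsTopK k x I → IsTopK k xhat J →
        (∀ i, |xhat i - x i| ≤
          ε ^ (p / (p - 1)) * residNorm p x I / (c₁ * (k : ℝ) ^ (1 / p))) →
        ∀ xhatJ : Fin n → ℝ, (∀ j, xhatJ j = if j ∈ J then xhat j else 0) →
          |(∑ i, |x i - xhatJ i| ^ p) - ∑ i ∈ Iᶜ, |x i| ^ p| ≤
            C * ε * ∑ i ∈ Iᶜ, |x i| ^ p ∧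
          (∑ i, |x i - xhatJ i| ^ p) ≤ (1 + C * ε) * ∑ i ∈ Iᶜ, |x i| ^ p := by
  have hp1 : 1 < p := by linarith
  refine ⟨1, one_pos, 2 ^ p + 4 ^ p, by positivity, ?_⟩
  intro n k hk _ ε hε0 hε1 x xhat I J hI hJ herr xhatJ hxhatJ
  rw [one_mul] at herr
  set S := ∑ i ∈ Iᶜ, |x i| ^ p
  set δ := ε ^ (p / (p - 1)) * residNorm p x I / (k : ℝ) ^ (1 / p)
  have hS : 0 ≤ S := by positivity
  have hδ : 0 ≤ δ := by unfold δ residNorm; positivity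
  have hkδ : k * δ ^ p = ε ^ (p / (p - 1) * p) * S := by
    change k * (ε ^ (p / (p - 1)) * S ^ (1 / p) / (k : ℝ) ^ (1 / p)) ^ p = _
    have hk0 : (0 : ℝ) < k := by exact_mod_cast hk
    rw [mul_rpow_one_div_div_rpow_one_div_rpow (by linarith) (by positivity) hS hk0.le,
      mul_div_cancel₀ _ hk0.ne', ← Real.rpow_mul hε0.le]
  obtain ⟨hlow, hup⟩ :=
    sum_abs_sub_truncation_rpow_bounds hI hJ herr hxhatJ hp1.le hε0 hε1 hδ
  have hδε : k * δ ^ p * (1 + (4 / ε) ^ p) ≤ (1 + 4 ^ p) * ε * S := by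
    rw [hkδ, mul_right_comm]
    exact mul_le_mul_of_nonneg_right (rpow_mul_one_add_div_rpow_le hp1 hε0 hε1) hS
  have hT : ∑ i, |x i - xhatJ i| ^ p ≤ (1 + (2 ^ p + 4 ^ p) * ε) * S := by linarith
  exact ⟨abs_sub_le_iff.2 ⟨by linarith, by linarith⟩, hT⟩
end
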